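/- arXiv:1301.1395 — 4 statements merged into one kernel-verified Lean document; each statement's English description precedes it below -/
import Mathlib

section
/- Let (I,J) be an approximating pair, i.e. I ⊆ J. If (I,J) ⊨ φ under the pair evaluation, then for every interpretation K with I ⊆ K ⊆ J we have K ⊨ φ classically. -/
/-- Propositional formulas over a set of atoms `α`, built with ¬, ∧, ∨. -/
inductive PForm (α : Type) : Type
  | atom : α → PForm α
  | neg  : PForm α → PForm α
  | conj : PForm α → PForm α → PForm α
  | disj : PForm α → PForm α → PForm α

/-- Classical satisfaction `I ⊨ φ`; an interpretation is a set of true atoms. -/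
def PForm.sat {α : Type} (I : Set α) : PForm α → Prop
  | .atom p => p ∈ I
  | .neg ψ => ¬ PForm.sat I ψ
  | .conj a b => PForm.sat I a ∧ PForm.sat I b
  | .disj a b => PForm.sat I a ∨ PForm.sat I b

/-- Pair evaluation `(I,J) ⊨ φ`: atoms in `I`, the pair is swapped at negations. -/
def PForm.psat {α : Type} : Set α → Set α → PForm α → Prop
  | I, _, .atom p => p ∈ I
  | I, J, .neg ψ => ¬ PForm.psat J I ψ
  | I, J, .conj a b => PForm.psat I J a ∧ PForm.psat I J b
  | I, J, .disj a b => PForm.psat I J a ∨ PForm.psat I J b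

namespace PForm

variable {α : Type} {I J K : Set α}

/- Both directions are needed for the induction: a negation turns each one into the other,
since the pair is swapped exactly where the implication is reversed. -/
theorem sat_of_psat_and_psat_swap_of_sat (hIK : I ⊆ K) (hKJ : K ⊆ J) (φ : PForm α) :
    (psat I J φ → sat K φ) ∧ (sat K φ → psat J I φ) := by
  induction φ with
  | atom p => exact ⟨fun h => hIK h, fun h => hKJ h⟩
  | neg ψ ih => exact ⟨fun h hψ => h (ih.2 hψ), fun h hψ => h (ih.1 hψ)⟩
  | conj a b iha ihb =>
    exact ⟨fun h => ⟨iha.1 h.1, ihb.1 h.2⟩, fun h => ⟨iha.2 h.1, ihb.2 h.2⟩⟩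
  | disj a b iha ihb => exact ⟨Or.imp iha.1 ihb.1, Or.imp iha.2 ihb.2⟩

end PForm

theorem psat_approx_sat_general {α : Type}
    (φ : PForm α) (I J K : Set α)
    (h : PForm.psat I J φ)
    (hIK : I ⊆ K) (hKJ : K ⊆ J) :
    PForm.sat K φ := (PForm.sat_of_psat_and_psat_swap_of_sat hIK hKJ φ).1 h

/-- If an approximating pair certainly satisfies φ, every approximated
    interpretation classically satisfies φ. -/
theorem psat_approx_sat {α : Type} [Fintype α]
    (φ : PForm α) (I J K : Set α)
    (hIJ : I ⊆ J) (h : PForm.psat I J φ)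
    (hIK : I ⊆ K) (hKJ : K ⊆ J) :
    PForm.sat K φ :=
  psat_approx_sat_general φ I J K h hIK hKJ
end

section
/- Let (I,J) be an approximating pair (I ⊆ J). If there exists an interpretation K with I ⊆ K ⊆ J such that K ⊨ φ classically, then (J,I) ⊨ φ under the pair evaluation. -/
namespace PForm

variable {α : Type}

theorem psat_self_iff_sat (K : Set α) (φ : PForm α) : psat K K φ ↔ sat K φ := by
  induction φ with
  | atom p => rfl
  | neg ψ ih => exact not_congr ih
  | conj a b iha ihb => exact and_congr iha ihb
  | disj a b iha ihb => exact or_congr iha ihb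

theorem psat_mono {I J I' J' : Set α} (hI : I ⊆ I') (hJ : J' ⊆ J) {φ : PForm α}
    (h : psat I J φ) : psat I' J' φ := by
  induction φ generalizing I J I' J' with
  | atom p => exact hI h
  | neg ψ ih => exact fun h' => h (ih hJ hI h')
  | conj a b iha ihb => exact ⟨iha hI hJ h.1, ihb hI hJ h.2⟩
  | disj a b iha ihb => exact h.imp (iha hI hJ) (ihb hI hJ)

end PForm

theorem sat_approx_psat_rev_general {α : Type}
    (φ : PForm α) (I J K : Set α)
    (hIK : I ⊆ K) (hKJ : K ⊆ J)
    (h : PForm.sat K φ) :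
    PForm.psat J I φ :=
  PForm.psat_mono hKJ hIK ((PForm.psat_self_iff_sat K φ).2 h)

/-- If some interpretation approximated by (I,J) classically satisfies φ,
    then the reversed pair evaluation (J,I) ⊨ φ holds. -/
theorem sat_approx_psat_rev {α : Type} [Fintype α]
    (φ : PForm α) (I J K : Set α)
    (hIJ : I ⊆ J) (hIK : I ⊆ K) (hKJ : K ⊆ J)
    (h : PForm.sat K φ) :
    PForm.psat J I φ :=
  sat_approx_psat_rev_general φ I J K hIK hKJ h
end

section
/- In the paper's Operation 5 (knowledge production): removing from W all pairs (I',J') such that (J',I') ⊭ ψ commutes with refinement, in the following sense: if (I',J') is refined to (I'',J'') (I' ⊆ I'', J'' ⊆ J'), and (J',I') ⊭ ψ, then also (J'',I'') ⊭ ψ. Hence a pair eliminated by a knowledge-producing rule at some stage would also be eliminated at any later, more precise stage. -/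
theorem PForm.psat_mono_s16 {α : Type} (φ : PForm α) {A B C D : Set α} (hAB : A ⊆ B) (hDC : D ⊆ C)
    (h : φ.psat A C) : φ.psat B D := by
  induction φ generalizing A B C D with
  | atom p => exact hAB h
  | neg χ ih => exact fun hχ => h (ih hDC hAB hχ)
  | conj a b iha ihb => exact ⟨iha hAB hDC h.1, ihb hAB hDC h.2⟩
  | disj a b iha ihb => exact h.imp (iha hAB hDC) (ihb hAB hDC)

theorem op5_elimination_persists_general {α : Type}
    (ψ : PForm α) (I' I'' J' J'' : Set α)
    (hI : I' ⊆ I'') (hJ : J'' ⊆ J')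
    (h : ¬ PForm.psat J' I' ψ) :
    ¬ PForm.psat J'' I'' ψ :=
  fun hψ => h (ψ.psat_mono_s16 hJ hI hψ)

/-- Elimination by a knowledge-producing rule (Operation 5) commutes with
    refinement: if the possible evaluation of ψ fails at (I',J'), it fails at
    any refinement (I'',J''). -/
theorem op5_elimination_persists {α : Type} [Fintype α]
    (ψ : PForm α) (I' I'' J' J'' : Set α)
    (hI : I' ⊆ I'') (hJ : J'' ⊆ J')
    (h : ¬ PForm.psat J' I' ψ) :
    ¬ PForm.psat J'' I'' ψ :=
  op5_elimination_persists_general ψ I' I'' J' J'' hI hJ h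
end

section
/- For the knowledge producing definition { Kq ← ¬Kp ; Kp ← ¬Kq } over atoms {p,q}, there exist two complete derivation sequences with different limits: one that first applies the rule Kq ← ¬Kp, ending in a state where q is known and p is not, and one that first applies Kp ← ¬Kq, ending in a state where p is known and q is not. Hence complete derivation sequences that are not sound need not be confluent. -/
/-- FO(K)-style formulas without nesting of K: propositional formulas extended
    with modal literals `K ψ` where ψ is modal-free. -/
inductive MForm (α : Type) : Type
  | atom : α → MForm α
  | K    : PForm α → MForm α
  | neg  : MForm α → MForm α
  | conj : MForm α → MForm α → MForm α
  | disj : MForm α → MForm α → MForm α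

/-- Satisfaction in a knowledge structure (I, W): atoms in I, `K ψ` holds iff
    ψ holds classically in every world of W. -/
def MForm.msat {α : Type} (I : Set α) (W : Set (Set α)) : MForm α → Prop
  | .atom p => p ∈ I
  | .K ψ => ∀ J ∈ W, PForm.sat J ψ
  | .neg φ => ¬ MForm.msat I W φ
  | .conj a b => MForm.msat I W a ∧ MForm.msat I W b
  | .disj a b => MForm.msat I W a ∨ MForm.msat I W b

/-- Reverse an approximating pair. -/
def prRev {α : Type} (pr : Set α × Set α) : Set α × Set α := (pr.2, pr.1)

/-- Approximate modal evaluation in an approximate knowledge structure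
    ((I,J), W): atoms in I; `K ψ` holds iff ψ holds at every pair of W;
    negation swaps the outer pair and reverses every pair of W. -/
def MForm.asat {α : Type} : Set α × Set α → Set (Set α × Set α) → MForm α → Prop
  | pr, _, .atom p => p ∈ pr.1
  | _, W, .K ψ => ∀ pr' ∈ W, PForm.psat pr'.1 pr'.2 ψ
  | pr, W, .neg φ => ¬ MForm.asat (pr.2, pr.1) (prRev '' W) φ
  | pr, W, .conj a b => MForm.asat pr W a ∧ MForm.asat pr W b
  | pr, W, .disj a b => MForm.asat pr W a ∨ MForm.asat pr W b

/-- Embedding of modal-free formulas into FO(K) formulas. -/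
def PForm.toM {α : Type} : PForm α → MForm α
  | .atom p => MForm.atom p
  | .neg φ => MForm.neg (PForm.toM φ)
  | .conj a b => MForm.conj (PForm.toM a) (PForm.toM b)
  | .disj a b => MForm.disj (PForm.toM a) (PForm.toM b)

/-- Atoms for the example { Kq ← ¬Kp ; Kp ← ¬Kq }: p = true, q = false. -/
def pAtm : PForm Bool := PForm.atom true
def qAtm : PForm Bool := PForm.atom false

/-- The maximally ignorant world set: an approximating pair for each of the
    four possible worlds. -/
def W0 : Set (Set Bool × Set Bool) := {pr | ∃ O : Set Bool, pr = (O, O)}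

/-- Applying Operation 5 for the rule Kq ← ¬Kp to W0. -/
def Wq : Set (Set Bool × Set Bool) := {pr ∈ W0 | PForm.psat pr.2 pr.1 qAtm}

/-- Applying Operation 5 for the rule Kp ← ¬Kq to W0. -/
def Wp : Set (Set Bool × Set Bool) := {pr ∈ W0 | PForm.psat pr.2 pr.1 pAtm}


theorem PForm.psat_self {α : Type} (I : Set α) (φ : PForm α) :
    PForm.psat I I φ ↔ PForm.sat I φ := by
  induction φ with
  | atom p => rfl
  | neg ψ ih => exact not_congr ih
  | conj a b iha ihb => exact and_congr iha ihb
  | disj a b iha ihb => exact or_congr iha ihb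

theorem MForm.asat_neg_K_iff {α : Type} (pr : Set α × Set α) (W : Set (Set α × Set α))
    (ψ : PForm α) :
    MForm.asat pr W (.neg (.K ψ)) ↔ ∃ pr' ∈ W, ¬ PForm.psat pr'.2 pr'.1 ψ := by
  simp only [MForm.asat, Set.forall_mem_image, prRev, not_forall, exists_prop]

/-- The approximate world set representing the set of worlds `S`. -/
def exactPairs {α : Type} (S : Set (Set α)) : Set (Set α × Set α) :=
  (fun O => (O, O)) '' S

section exactPairs

variable {α : Type} (S : Set (Set α)) (ψ : PForm α)

theorem asat_K_exactPairs (pr : Set α × Set α) :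
    MForm.asat pr (exactPairs S) (.K ψ) ↔ ∀ O ∈ S, PForm.sat O ψ := by
  simp only [MForm.asat, exactPairs, Set.forall_mem_image, PForm.psat_self]

theorem asat_neg_K_exactPairs (pr : Set α × Set α) :
    MForm.asat pr (exactPairs S) (.neg (.K ψ)) ↔ ∃ O ∈ S, ¬ PForm.sat O ψ := by
  simp only [MForm.asat_neg_K_iff, exactPairs, Set.exists_mem_image, PForm.psat_self]

theorem sep_exactPairs :
    {pr ∈ exactPairs S | PForm.psat pr.2 pr.1 ψ} = exactPairs {O ∈ S | PForm.sat O ψ} := by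
  ext pr
  simp only [exactPairs, Set.mem_ofPred_eq, Set.mem_image]
  constructor
  · rintro ⟨⟨O, hO, rfl⟩, hψ⟩
    exact ⟨O, ⟨hO, (PForm.psat_self O ψ).mp hψ⟩, rfl⟩
  · rintro ⟨O, ⟨hO, hψ⟩, rfl⟩
    exact ⟨⟨O, hO, rfl⟩, (PForm.psat_self O ψ).mpr hψ⟩

end exactPairs

theorem exactPairs_injective {α : Type} : Function.Injective (exactPairs (α := α)) :=
  Set.image_injective.mpr fun _ _ h => congrArg Prod.fst h

theorem W0_eq_exactPairs_univ : W0 = exactPairs Set.univ := by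
  ext pr
  simp only [W0, exactPairs, Set.image_univ, Set.mem_ofPred_eq, Set.mem_range, eq_comm]

theorem Wq_eq_exactPairs : Wq = exactPairs {O | false ∈ O} := by
  rw [Wq, W0_eq_exactPairs_univ, sep_exactPairs, Set.sep_univ]
  rfl

theorem Wp_eq_exactPairs : Wp = exactPairs {O | true ∈ O} := by
  rw [Wp, W0_eq_exactPairs_univ, sep_exactPairs, Set.sep_univ]
  rfl

theorem asat_neg_K_atom_exactPairs_univ {α : Type} (pr : Set α × Set α) (a : α) :
    MForm.asat pr (exactPairs Set.univ) (.neg (.K (.atom a))) :=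
  (asat_neg_K_exactPairs _ _ pr).mpr ⟨∅, Set.mem_univ _, Set.notMem_empty a⟩

/-- The structure reached by applying `K a ← ¬K b` to the initial one. -/
theorem exactPairs_atom_limit_complete {α : Type} {a b : α} (hab : a ≠ b) (pr : Set α × Set α) :
    MForm.asat pr (exactPairs {O | a ∈ O}) (.K (.atom a)) ∧
    ¬ MForm.asat pr (exactPairs {O | a ∈ O}) (.K (.atom b)) ∧
    {w ∈ exactPairs {O | a ∈ O} | PForm.psat w.2 w.1 (.atom a)} = exactPairs {O | a ∈ O} ∧
    ¬ MForm.asat pr (exactPairs {O | a ∈ O}) (.neg (.K (.atom a))) := by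
  refine ⟨?_, ?_, ?_, ?_⟩
  · exact (asat_K_exactPairs _ _ pr).mpr fun _ hO => hO
  · rw [asat_K_exactPairs]
    exact fun h => hab.symm (h {a} rfl)
  · rw [sep_exactPairs]
    exact congrArg exactPairs (Set.sep_eq_self_iff_mem_true.mpr fun _ hO => hO)
  · rw [asat_neg_K_exactPairs]
    exact fun ⟨_, hO, hnO⟩ => hnO hO

/-- For { Kq ← ¬Kp ; Kp ← ¬Kq } there are two complete derivation sequences
    with different limits: both rule bodies hold at the initial structure; the
    sequence applying the first rule ends (completely: no operation can change
    the structure any further) in a state knowing q but not p, the one applying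
    the second rule ends in a state knowing p but not q, and the two limits
    differ.  Hence complete but unsound sequences need not be confluent. -/
theorem two_rules_not_confluent :
    -- both operations are applicable at the initial structure
    (MForm.asat (∅, Set.univ) W0 (MForm.neg (MForm.K pAtm)) ∧
     MForm.asat (∅, Set.univ) W0 (MForm.neg (MForm.K qAtm))) ∧
    -- first sequence: q is known, p is not, and the sequence is complete
    (MForm.asat (∅, Set.univ) Wq (MForm.K qAtm) ∧
     ¬ MForm.asat (∅, Set.univ) Wq (MForm.K pAtm) ∧
     {pr ∈ Wq | PForm.psat pr.2 pr.1 qAtm} = Wq ∧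
     ¬ MForm.asat (∅, Set.univ) Wq (MForm.neg (MForm.K qAtm))) ∧
    -- second sequence: p is known, q is not, and the sequence is complete
    (MForm.asat (∅, Set.univ) Wp (MForm.K pAtm) ∧
     ¬ MForm.asat (∅, Set.univ) Wp (MForm.K qAtm) ∧
     {pr ∈ Wp | PForm.psat pr.2 pr.1 pAtm} = Wp ∧
     ¬ MForm.asat (∅, Set.univ) Wp (MForm.neg (MForm.K pAtm))) ∧
    -- the two limits differ
    Wq ≠ Wp := by
  rw [W0_eq_exactPairs_univ, Wq_eq_exactPairs, Wp_eq_exactPairs]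
  have hworlds : {O : Set Bool | false ∈ O} ≠ {O | true ∈ O} := fun h => by
    have hq : ({false} : Set Bool) ∈ {O | true ∈ O} := h ▸ Set.mem_singleton false
    exact Bool.false_ne_true (Set.eq_of_mem_singleton hq).symm
  exact ⟨⟨asat_neg_K_atom_exactPairs_univ _ _, asat_neg_K_atom_exactPairs_univ _ _⟩,
    exactPairs_atom_limit_complete Bool.false_ne_true _,
    exactPairs_atom_limit_complete Bool.false_ne_true.symm _,
    exactPairs_injective.ne hworlds⟩
end
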